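/- Let P ∈ ℝ^{d×d} be an orthogonal projector (Pᵀ = P, P² = P) with rank(P) = k, let s be a random vector with standard Gaussian law N(0, I_d) on ℝ^d, and let a ∈ ℝ^d. Then E[(aᵀs)² · ‖Ps‖₂²] = k‖a‖₂² + 2 aᵀPa. In particular, if a ∈ range(P), then E[(aᵀs)² ‖Ps‖₂²] = (k + 2)‖a‖₂². -/

import Mathlib

/-!
If `s ~ N(0, I)`, then `⟪c, s⟫ ~ N(0, ‖c‖²)`, so `E ⟪c, s⟫⁴ = 3 ‖c‖⁴` (the fourth derivative at `0`
of the moment generating function `exp (‖c‖² t² / 2)`). Polarizing this quartic form,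
`x²y² = ((x+y)⁴ + (x-y)⁴ - 2x⁴ - 2y⁴) / 12`, gives the coordinate-free Isserlis identity
`E [⟪a, s⟫² ⟪b, s⟫²] = ‖a‖² ‖b‖² + 2 ⟪a, b⟫²`. Writing `‖T s‖² = ∑ᵢ ⟪T† bᵢ, s⟫²` for an
orthonormal basis `bᵢ` and summing gives `E [⟪a, s⟫² ‖T s‖²] = ‖a‖² tr (T T†) + 2 ‖T a‖²`.
For an orthogonal projector `T† = T = T²`, so `tr T = rank T` and `‖T a‖² = ⟪a, T a⟫`.
-/

open MeasureTheory ProbabilityTheory Real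

/-- The standard Gaussian measure `N(0, I_d)` on `ℝ^d`. -/
noncomputable def stdGaussian (d : ℕ) : Measure (EuclideanSpace ℝ (Fin d)) :=
  (Measure.pi fun _ : Fin d => gaussianReal 0 1).map (EuclideanSpace.equiv (Fin d) ℝ).symm

open scoped NNReal RealInnerProductSpace

lemma deriv_mul_exp_mul_sq_div_two (v : ℝ) {p : ℝ → ℝ} (hp : Differentiable ℝ p) :
    deriv (fun t => p t * rexp (v * t ^ 2 / 2)) =
      fun t => (deriv p t + v * t * p t) * rexp (v * t ^ 2 / 2) := by
  ext t
  have hq : HasDerivAt (fun t => v * t ^ 2 / 2) (v * t) t :=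
    (((hasDerivAt_pow 2 t).const_mul v).div_const 2).congr_deriv (by ring)
  rw [((hp t).hasDerivAt.fun_mul hq.exp).deriv]
  ring

lemma iteratedDeriv_four_exp_mul_sq_div_two (v : ℝ) :
    iteratedDeriv 4 (fun t => rexp (v * t ^ 2 / 2)) 0 = 3 * v ^ 2 := by
  have step (p q : ℝ → ℝ) (hp : Differentiable ℝ p) (hq : ∀ t, deriv p t + v * t * p t = q t) :
      deriv (fun t => p t * rexp (v * t ^ 2 / 2)) = fun t => q t * rexp (v * t ^ 2 / 2) := by
    simp only [deriv_mul_exp_mul_sq_div_two v hp, hq]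
  have d1 := step (fun _ => 1) (fun t => v * t) (by fun_prop) (fun t => by simp)
  have d2 := step (fun t => v * t) (fun t => v + v ^ 2 * t ^ 2) (by fun_prop)
    (fun t => by simp only [deriv_const_mul_id']; ring)
  have d3 := step (fun t => v + v ^ 2 * t ^ 2) (fun t => 3 * v ^ 2 * t + v ^ 3 * t ^ 3)
    (by fun_prop) (fun t => by
      simp only [deriv_const_add', deriv_const_mul_field', deriv_pow_field]
      ring)
  have d4 := step (fun t => 3 * v ^ 2 * t + v ^ 3 * t ^ 3)
    (fun t => 3 * v ^ 2 + 6 * v ^ 3 * t ^ 2 + v ^ 4 * t ^ 4) (by fun_prop) (fun t => by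
      rw [deriv_fun_add (by fun_prop) (by fun_prop)]
      simp only [deriv_const_mul_id', deriv_const_mul_field', deriv_pow_field]
      ring)
  simp only [one_mul] at d1
  simp [iteratedDeriv_succ', d1, d2, d3, d4]

lemma integral_pow_four_gaussianReal (v : ℝ≥0) :
    ∫ x, x ^ 4 ∂gaussianReal 0 v = 3 * v ^ 2 := by
  have h := iteratedDeriv_mgf_zero (X := id) (μ := gaussianReal 0 v) (by simp) 4
  simp only [mgf_id_gaussianReal, zero_mul, zero_add,
    iteratedDeriv_four_exp_mul_sq_div_two] at h
  simpa using h.symm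

lemma sq_mul_sq_eq_polarization (x y : ℝ) :
    x ^ 2 * y ^ 2 = ((x + y) ^ 4 + (x - y) ^ 4 - 2 * x ^ 4 - 2 * y ^ 4) / 12 := by
  ring

section StdGaussian

variable {E : Type*} [NormedAddCommGroup E] [InnerProductSpace ℝ E] [FiniteDimensional ℝ E]
  [MeasurableSpace E] [BorelSpace E]

lemma map_inner_stdGaussian (c : E) :
    (stdGaussian E).map (fun x => ⟪c, x⟫) = gaussianReal 0 (‖c‖₊ ^ 2) := by
  have h := IsGaussian.map_eq_gaussianReal (μ := stdGaussian E) (innerSL ℝ c)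
  rw [integral_strongDual_stdGaussian, variance_dual_stdGaussian, innerSL_apply_norm] at h
  convert h using 2 <;> ext <;> simp

@[fun_prop]
lemma integrable_inner_pow_stdGaussian (c : E) (n : ℕ) :
    Integrable (fun x => ⟪c, x⟫ ^ n) (stdGaussian E) := by
  have h := IsGaussian.memLp_dual (stdGaussian E) (innerSL ℝ c) n (by simp)
  refine (integrable_norm_iff (by fun_prop)).1 ?_
  simpa [norm_pow] using h.integrable_norm_pow'

lemma integral_inner_pow_four_stdGaussian (c : E) :
    ∫ x, ⟪c, x⟫ ^ 4 ∂stdGaussian E = 3 * ‖c‖ ^ 4 := by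
  rw [← integral_map (φ := fun x => ⟪c, x⟫) (f := fun y => y ^ 4) (by fun_prop) (by fun_prop),
    map_inner_stdGaussian, integral_pow_four_gaussianReal]
  push_cast
  ring

lemma integrable_inner_sq_mul_inner_sq_stdGaussian (a b : E) :
    Integrable (fun x => ⟪a, x⟫ ^ 2 * ⟪b, x⟫ ^ 2) (stdGaussian E) := by
  simp_rw [sq_mul_sq_eq_polarization, ← inner_add_left, ← inner_sub_left]
  fun_prop

lemma integral_inner_sq_mul_inner_sq_stdGaussian (a b : E) :
    ∫ x, ⟪a, x⟫ ^ 2 * ⟪b, x⟫ ^ 2 ∂stdGaussian E = ‖a‖ ^ 2 * ‖b‖ ^ 2 + 2 * ⟪a, b⟫ ^ 2 := by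
  simp_rw [sq_mul_sq_eq_polarization, ← inner_add_left, ← inner_sub_left]
  rw [integral_div, integral_sub, integral_sub, integral_add, integral_const_mul,
    integral_const_mul]
  · simp only [integral_inner_pow_four_stdGaussian]
    have h4 (c : E) : ‖c‖ ^ 4 = (‖c‖ ^ 2) ^ 2 := by ring
    rw [h4, h4 (a - b), h4 a, h4 b, norm_add_sq_real, norm_sub_sq_real]
    ring
  all_goals fun_prop

variable {F : Type*} [NormedAddCommGroup F] [InnerProductSpace ℝ F] [FiniteDimensional ℝ F]

lemma integral_inner_sq_mul_norm_sq_stdGaussian (T : E →ₗ[ℝ] F) (a : E) :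
    ∫ x, ⟪a, x⟫ ^ 2 * ‖T x‖ ^ 2 ∂stdGaussian E =
      ‖a‖ ^ 2 * LinearMap.trace ℝ F (T ∘ₗ T.adjoint) + 2 * ‖T a‖ ^ 2 := by
  let b := stdOrthonormalBasis ℝ F
  have hnorm (x : E) : ‖T x‖ ^ 2 = ∑ i, ⟪T.adjoint (b i), x⟫ ^ 2 := by
    simp_rw [LinearMap.adjoint_inner_left, b.sum_sq_inner_right]
  simp_rw [hnorm, Finset.mul_sum]
  rw [integral_finsetSum _ fun i _ => integrable_inner_sq_mul_inner_sq_stdGaussian _ _]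
  simp_rw [integral_inner_sq_mul_inner_sq_stdGaussian, Finset.sum_add_distrib, ← Finset.mul_sum,
    LinearMap.trace_eq_sum_inner _ b, LinearMap.comp_apply, ← T.adjoint_inner_left,
    real_inner_self_eq_norm_sq, real_inner_comm a]

lemma integral_inner_sq_mul_norm_sq_stdGaussian_of_isIdempotentElem {T : E →ₗ[ℝ] E}
    (hadj : T.adjoint = T) (hidem : IsIdempotentElem T) (a : E) :
    ∫ x, ⟪a, x⟫ ^ 2 * ‖T x‖ ^ 2 ∂stdGaussian E =
      Module.finrank ℝ (LinearMap.range T) * ‖a‖ ^ 2 + 2 * ⟪a, T a⟫ := by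
  rw [integral_inner_sq_mul_norm_sq_stdGaussian, hadj, ← Module.End.mul_eq_comp, hidem.eq,
    (LinearMap.IsIdempotentElem.isProj_range T hidem).trace, ← real_inner_self_eq_norm_sq (T a),
    ← LinearMap.adjoint_inner_right, hadj, ← Module.End.mul_apply, hidem.eq]
  ring

end StdGaussian

lemma stdGaussian_eq_stdGaussian_euclideanSpace (d : ℕ) :
    _root_.stdGaussian d = ProbabilityTheory.stdGaussian (EuclideanSpace ℝ (Fin d)) :=
  map_pi_eq_stdGaussian

lemma Matrix.rank_eq_finrank_range_toEuclideanLin {𝕜 m n : Type*} [RCLike 𝕜] [Fintype m]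
    [Fintype n] [DecidableEq n] (A : Matrix m n 𝕜) :
    A.rank = Module.finrank 𝕜 (LinearMap.range (Matrix.toEuclideanLin A)) := by
  rw [Matrix.toEuclideanLin_eq_toLin_orthonormal]
  exact A.rank_eq_finrank_range_toLin _ _

/-- For a rank-`k` orthogonal projector `P`, `s ~ N(0, I_d)` and `a ∈ ℝ^d`:
`E[(aᵀs)² ‖Ps‖²] = k ‖a‖² + 2 aᵀPa`; if moreover `a ∈ range(P)`, this equals
`(k+2) ‖a‖²`. -/
theorem gaussian_inner_sq_proj_norm_sq
    {d k : ℕ} (P : Matrix (Fin d) (Fin d) ℝ)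
    (hsymm : P.transpose = P) (hidem : P * P = P) (hrank : P.rank = k)
    (a : EuclideanSpace ℝ (Fin d)) :
    (∫ s, (inner ℝ a s : ℝ) ^ 2 * ‖Matrix.toEuclideanLin P s‖ ^ 2 ∂(stdGaussian d)) =
        k * ‖a‖ ^ 2 + 2 * (inner ℝ a (Matrix.toEuclideanLin P a) : ℝ) ∧
    (a ∈ LinearMap.range (Matrix.toEuclideanLin P) →
      (∫ s, (inner ℝ a s : ℝ) ^ 2 * ‖Matrix.toEuclideanLin P s‖ ^ 2 ∂(stdGaussian d)) =
        (k + 2) * ‖a‖ ^ 2) := by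
  set T := Matrix.toEuclideanLin P
  have hadj : T.adjoint = T := by
    rw [← Matrix.toEuclideanLin_conjTranspose_eq_adjoint,
      Matrix.conjTranspose_eq_transpose_of_trivial, hsymm]
  have hT : IsIdempotentElem T := by
    rw [IsIdempotentElem, Module.End.mul_eq_comp, ← Matrix.toLpLin_mul_same, hidem]
  have hk : Module.finrank ℝ (LinearMap.range T) = k := by
    rw [← Matrix.rank_eq_finrank_range_toEuclideanLin, hrank]
  rw [stdGaussian_eq_stdGaussian_euclideanSpace,
    integral_inner_sq_mul_norm_sq_stdGaussian_of_isIdempotentElem hadj hT, hk]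
  refine ⟨rfl, fun ha => ?_⟩
  rw [(LinearMap.IsIdempotentElem.isProj_range T hT).map_id a ha, real_inner_self_eq_norm_sq]
  ring
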